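/- arXiv:1708.09733 — 5 statements merged into one kernel-verified Lean document; each statement's English description precedes it below -/
import Mathlib

section
/- Sharpness for 1 < p < ∞: if g ≥ 0 is integrable with respect to dt/t on (0,∞), then lim_{λ→∞} (2λ)^{-1} ∫_{e^{-λ}}^{e^λ} ∫_{e^{-λ}}^{e^λ} g(r/t) (dr/r)(dt/t) = ∫₀^∞ g(t) dt/t. -/
/-!
In logarithmic coordinates `r = eˣ`, `t = eʸ` the double integral becomes
`∫∫_{[-λ,λ]²} G (x - y) dx dy` with `G = g ∘ exp ∈ L¹(ℝ)` and `∫ G = ∫₀^∞ g dt/t`. Integrating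
along the diagonals turns it into `∫₀^{2λ} H`, where `H w = ∫_{-w}^{w} G`, so the quantity is a
Cesàro mean of `H`, and `H w → ∫ G`.
-/

open MeasureTheory Set Filter Real Topology

theorem integral_image_exp_div (φ : ℝ → ℝ) {s : Set ℝ} (hs : MeasurableSet s) :
    ∫ r in exp '' s, φ r / r = ∫ x in s, φ (exp x) := by
  rw [integral_image_eq_integral_abs_deriv_smul hs
    (fun x _ ↦ (hasDerivAt_exp x).hasDerivWithinAt) exp_injective.injOn]
  refine setIntegral_congr_fun hs fun x _ ↦ ?_
  simp [abs_of_pos (exp_pos x), mul_div_cancel₀ _ (exp_ne_zero x)]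

theorem integrableOn_image_exp_div_iff (φ : ℝ → ℝ) {s : Set ℝ} (hs : MeasurableSet s) :
    IntegrableOn (fun r ↦ φ r / r) (exp '' s) ↔ IntegrableOn (fun x ↦ φ (exp x)) s := by
  rw [integrableOn_image_iff_integrableOn_abs_deriv_smul hs
    (fun x _ ↦ (hasDerivAt_exp x).hasDerivWithinAt) exp_injective.injOn]
  refine integrableOn_congr_fun (fun x _ ↦ ?_) hs
  simp [abs_of_pos (exp_pos x), mul_div_cancel₀ _ (exp_ne_zero x)]

theorem tendsto_inv_smul_intervalIntegral_of_tendsto {E : Type*} [NormedAddCommGroup E]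
    [NormedSpace ℝ E] [CompleteSpace E] {H : ℝ → E} {I : E} {C : ℝ} (hH : StronglyMeasurable H)
    (hbound : ∀ w, 0 ≤ w → ‖H w‖ ≤ C) (hlim : Tendsto H atTop (𝓝 I)) :
    Tendsto (fun T ↦ T⁻¹ • ∫ w in 0..T, H w) atTop (𝓝 I) := by
  have hrescale : ∀ᶠ T in atTop, ∫ x in 0..1, H (T * x) = T⁻¹ • ∫ w in 0..T, H w := by
    filter_upwards [eventually_ne_atTop 0] with T hT
    simpa using intervalIntegral.integral_comp_mul_left H hT (a := 0) (b := 1)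
  have hdct : Tendsto (fun T ↦ ∫ x in 0..1, H (T * x)) atTop (𝓝 (∫ _ in (0 : ℝ)..1, I)) := by
    refine intervalIntegral.tendsto_integral_filter_of_dominated_convergence (fun _ ↦ C)
      (.of_forall fun T ↦ (hH.comp_measurable (measurable_const_mul T)).aestronglyMeasurable)
      ?_ intervalIntegrable_const ?_
    · filter_upwards [eventually_ge_atTop 0] with T hT
      refine .of_forall fun x hx ↦ hbound _ ?_
      rw [uIoc_of_le zero_le_one] at hx
      exact mul_nonneg hT hx.1.le
    · refine .of_forall fun x hx ↦ hlim.comp ?_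
      rw [uIoc_of_le zero_le_one] at hx
      exact tendsto_id.atTop_mul_const hx.1
  simpa [intervalIntegral.integral_const] using hdct.congr' hrescale

theorem integral_Icc_integral_Icc_comp_sub {G : ℝ → ℝ}
    (hG : ∀ p q, IntervalIntegrable G volume p q) {a : ℝ} (ha : 0 ≤ a) :
    ∫ y in Icc (-a) a, ∫ x in Icc (-a) a, G (x - y) = ∫ w in 0..2 * a, ∫ u in -w..w, G u := by
  set Ψ : ℝ → ℝ := fun z ↦ ∫ u in 0..z, G u
  have hΨ : Continuous Ψ := intervalIntegral.continuous_primitive hG 0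
  have hdiff (p q : ℝ) : ∫ u in p..q, G u = Ψ q - Ψ p :=
    (intervalIntegral.integral_interval_sub_left (hG 0 q) (hG 0 p)).symm
  have hinner (y : ℝ) : ∫ x in Icc (-a) a, G (x - y) = Ψ (a - y) - Ψ (-(a + y)) := by
    rw [integral_Icc_eq_integral_Ioc, ← intervalIntegral.integral_of_le (by linarith),
      intervalIntegral.integral_comp_sub_right, hdiff, neg_sub_left, add_comm]
  have hint (f : ℝ → ℝ) (hf : Continuous f) (p q : ℝ) :
      IntervalIntegrable (fun w ↦ Ψ (f w)) volume p q :=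
    (hΨ.comp hf).intervalIntegrable p q
  calc ∫ y in Icc (-a) a, ∫ x in Icc (-a) a, G (x - y)
      = ∫ y in -a..a, (Ψ (a - y) - Ψ (-(a + y))) := by
        simp_rw [hinner]
        rw [integral_Icc_eq_integral_Ioc, ← intervalIntegral.integral_of_le (by linarith)]
    _ = (∫ w in 0..2 * a, Ψ w) - ∫ w in 0..2 * a, Ψ (-w) := by
        rw [intervalIntegral.integral_sub (hint _ (by fun_prop) _ _) (hint _ (by fun_prop) _ _),
          intervalIntegral.integral_comp_sub_left Ψ,
          intervalIntegral.integral_comp_add_left (fun w ↦ Ψ (-w))]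
        ring_nf
    _ = ∫ w in 0..2 * a, ∫ u in -w..w, G u := by
        rw [← intervalIntegral.integral_sub (hint _ (by fun_prop) _ _) (hint _ (by fun_prop) _ _)]
        simp_rw [hdiff]

theorem tendsto_inv_mul_intervalIntegral_intervalIntegral_neg_self {G : ℝ → ℝ}
    (hG : Integrable G) :
    Tendsto (fun T ↦ T⁻¹ * ∫ w in 0..T, ∫ u in -w..w, G u) atTop (𝓝 (∫ u, G u)) := by
  have hcont : Continuous fun w ↦ ∫ u in -w..w, G u := by
    have hΨ := intervalIntegral.continuous_primitive (fun _ _ ↦ hG.intervalIntegrable) 0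
    refine (hΨ.sub (hΨ.comp continuous_neg)).congr fun w ↦ ?_
    exact intervalIntegral.integral_interval_sub_left hG.intervalIntegrable hG.intervalIntegrable
  have hbound (w : ℝ) (hw : 0 ≤ w) : ‖∫ u in -w..w, G u‖ ≤ ∫ u, ‖G u‖ := by
    refine (intervalIntegral.norm_integral_le_integral_norm (by linarith)).trans ?_
    rw [intervalIntegral.integral_of_le (by linarith)]
    exact setIntegral_le_integral hG.norm (.of_forall fun _ ↦ norm_nonneg _)
  exact tendsto_inv_smul_intervalIntegral_of_tendsto hcont.stronglyMeasurable hbound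
    (intervalIntegral_tendsto_integral hG tendsto_neg_atTop_atBot tendsto_id)

theorem mellin_sharp_limit_general (g : ℝ → ℝ)
    (hg1 : IntegrableOn (fun t => g t / t) (Set.Ioi (0 : ℝ))) :
    Tendsto
      (fun lam : ℝ => (2 * lam)⁻¹ *
        ∫ t in Set.Icc (Real.exp (-lam)) (Real.exp lam),
          (∫ r in Set.Icc (Real.exp (-lam)) (Real.exp lam), g (r / t) / r) / t)
      atTop (nhds (∫ t in Set.Ioi (0 : ℝ), g t / t)) := by
  rw [← range_exp, ← image_univ] at hg1 ⊢
  have hG : Integrable fun u ↦ g (exp u) :=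
    integrableOn_univ.1 ((integrableOn_image_exp_div_iff g MeasurableSet.univ).1 hg1)
  rw [integral_image_exp_div g MeasurableSet.univ, setIntegral_univ]
  have hlog (lam : ℝ) (hlam : 0 ≤ lam) :
      ∫ t in Icc (exp (-lam)) (exp lam), (∫ r in Icc (exp (-lam)) (exp lam), g (r / t) / r) / t
        = ∫ w in 0..2 * lam, ∫ u in -w..w, g (exp u) := by
    simp_rw [← image_exp_Icc, integral_image_exp_div _ measurableSet_Icc, ← exp_sub]
    exact integral_Icc_integral_Icc_comp_sub (fun _ _ ↦ hG.intervalIntegrable) hlam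
  refine ((tendsto_inv_mul_intervalIntegral_intervalIntegral_neg_self hG).comp
    (tendsto_id.const_mul_atTop two_pos)).congr' ?_
  filter_upwards [eventually_ge_atTop 0] with lam hlam
  rw [Function.comp_apply, id, hlog lam hlam]

/-- Sharpness for `1 < p < ∞`:
`lim_{λ→∞} (2λ)⁻¹ ∫_{e^{-λ}}^{e^λ} ∫_{e^{-λ}}^{e^λ} g(r/t) (dr/r)(dt/t) = ∫₀^∞ g dt/t`. -/
theorem mellin_sharp_limit (g : ℝ → ℝ) (hg0 : ∀ t ∈ Set.Ioi (0 : ℝ), 0 ≤ g t)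
    (hg1 : IntegrableOn (fun t => g t / t) (Set.Ioi (0 : ℝ))) :
    Tendsto
      (fun lam : ℝ => (2 * lam)⁻¹ *
        ∫ t in Set.Icc (Real.exp (-lam)) (Real.exp lam),
          (∫ r in Set.Icc (Real.exp (-lam)) (Real.exp lam), g (r / t) / r) / t)
      atTop (nhds (∫ t in Set.Ioi (0 : ℝ), g t / t)) :=
  mellin_sharp_limit_general g hg1
end

section
/- One-dimensional sharp Hardy inequality: let 1 < p < ∞ and a, b ∈ ℝ with a/p' > b/p and a + b = D > 0, where p' = p/(p-1). Define Hf(r) = ∫₀^r f(t) t^{D-1} dt for f on (0,∞). Then ‖r^{-a} Hf(r)‖_{L^p((0,∞), r^{D-1}dr)} ≤ C ‖r^b f(r)‖_{L^p((0,∞), r^{D-1}dr)} with C = (a/p' − b/p)^{-1}, and this constant is sharp. -/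
open MeasureTheory Set
open scoped ENNReal

/-- The measure `r^{D-1} dr` on `(0, ∞)`. -/
noncomputable def powMeasure (D : ℝ) : Measure ℝ :=
  (volume.restrict (Set.Ioi (0 : ℝ))).withDensity (fun r => ENNReal.ofReal (r ^ (D - 1)))

/-!
With `γ = a/p' - b/p = a - D/p` and `g(t) = t^{b + D/p} f(t)`, the inequality becomes
`‖r^{-γ} ∫₀^r g(t) t^{γ-1} dt‖ ≤ γ⁻¹ ‖g‖` in `L^p(dr/r)`: a convolution on the multiplicative
group `(0, ∞)` with the kernel `s^γ 1_{s ≤ 1}`, of mass `γ⁻¹`. The bound follows from Jensen's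
inequality for the measure `t^{γ-1} dt` on `(0, r]` (of mass `r^γ/γ`) followed by Tonelli's
theorem. For sharpness, `g = t^ε 1_{(0,1]}` satisfies `hardyOp γ g ≥ (γ + ε)⁻¹ g`; let `ε → 0`.
-/

open ENNReal (ofReal)

lemma lintegral_Ioc_rpow {c r : ℝ} (hc : -1 < c) (hr : 0 ≤ r) :
    ∫⁻ t in Ioc 0 r, ofReal (t ^ c) = ofReal (r ^ (c + 1) / (c + 1)) := by
  rw [← ofReal_integral_eq_lintegral_ofReal, ← intervalIntegral.integral_of_le hr,
    integral_rpow (Or.inl hc), Real.zero_rpow (by linarith), sub_zero]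
  · exact (intervalIntegral.intervalIntegrable_rpow' hc).1
  · exact (ae_restrict_iff' measurableSet_Ioc).mpr <| .of_forall fun t ht =>
      Real.rpow_nonneg ht.1.le _

lemma lintegral_Ioi_rpow {c t : ℝ} (hc : c < -1) (ht : 0 < t) :
    ∫⁻ r in Ioi t, ofReal (r ^ c) = ofReal (-t ^ (c + 1) / (c + 1)) := by
  rw [← ofReal_integral_eq_lintegral_ofReal (integrableOn_Ioi_rpow_of_lt hc ht),
    integral_Ioi_rpow_of_lt hc ht]
  exact (ae_restrict_iff' measurableSet_Ioi).mpr <| .of_forall fun r hr =>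
    Real.rpow_nonneg (ht.trans hr).le _

lemma rpow_lintegral_le_measure_univ_mul_lintegral_rpow {α : Type*} [MeasurableSpace α]
    {μ : Measure α} {p : ℝ} (hp : 1 ≤ p) {F : α → ℝ≥0∞} (hF : AEMeasurable F μ) :
    (∫⁻ x, F x ∂μ) ^ p ≤ μ univ ^ (p - 1) * ∫⁻ x, F x ^ p ∂μ := by
  rcases hp.eq_or_lt with rfl | hp
  · simp
  have hpq : p.HolderConjugate p.conjExponent := .conjExponent hp
  have hHolder := ENNReal.lintegral_mul_le_Lp_mul_Lq μ hpq hF aemeasurable_const (g := 1)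
  simp only [Pi.mul_apply, Pi.one_apply, mul_one, ENNReal.one_rpow, lintegral_const,
    one_mul] at hHolder
  calc (∫⁻ x, F x ∂μ) ^ p
      ≤ ((∫⁻ x, F x ^ p ∂μ) ^ (1 / p) * μ univ ^ (1 / p.conjExponent)) ^ p := by gcongr
    _ = μ univ ^ (p - 1) * ∫⁻ x, F x ^ p ∂μ := by
      rw [ENNReal.mul_rpow_of_nonneg _ _ hpq.nonneg, ← ENNReal.rpow_mul, ← ENNReal.rpow_mul,
        one_div_mul_cancel hpq.ne_zero, ENNReal.rpow_one, mul_comm, one_div, mul_comm _ p,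
        ← div_eq_mul_inv, hpq.div_conj_eq_sub_one]

lemma lintegral_Ioi_mul_lintegral_Ioc (a : ℝ) {g ψ : ℝ → ℝ≥0∞} (hg : Measurable g)
    (hψ : Measurable ψ) :
    ∫⁻ r in Ioi a, g r * ∫⁻ t in Ioc a r, ψ t = ∫⁻ t in Ioi a, ψ t * ∫⁻ r in Ici t, g r := by
  set S : Set (ℝ × ℝ) := {z | a < z.2 ∧ z.2 ≤ z.1}
  have hS : MeasurableSet S :=
    (measurableSet_lt measurable_const measurable_snd).inter
      (measurableSet_le measurable_snd measurable_fst)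
  set F : ℝ → ℝ → ℝ≥0∞ := fun r t => S.indicator (fun z => g z.1 * ψ z.2) (r, t)
  have hF : Measurable (Function.uncurry F) := Measurable.indicator (by fun_prop) hS
  calc ∫⁻ r in Ioi a, g r * ∫⁻ t in Ioc a r, ψ t
      = ∫⁻ r in Ioi a, ∫⁻ t in Ioi a, F r t := by
        refine setLIntegral_congr_fun measurableSet_Ioi fun r _ => ?_
        have hF_r : F r = (Ioc a r).indicator fun t => g r * ψ t := by
          ext t; simp [F, S, indicator, mem_Ioc]
        rw [hF_r, setLIntegral_indicator measurableSet_Ioc,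
          inter_eq_left.mpr Ioc_subset_Ioi_self, lintegral_const_mul _ hψ]
    _ = ∫⁻ t in Ioi a, ∫⁻ r in Ioi a, F r t := lintegral_lintegral_swap hF.aemeasurable
    _ = ∫⁻ t in Ioi a, ψ t * ∫⁻ r in Ici t, g r := by
        refine setLIntegral_congr_fun measurableSet_Ioi fun t (ht : a < t) => ?_
        have hF_t : (F · t) = (Ici t).indicator fun r => g r * ψ t := by
          ext r; simp [F, S, indicator, ht]
        rw [hF_t, setLIntegral_indicator measurableSet_Ici,
          inter_eq_left.mpr (Ici_subset_Ioi.mpr ht), lintegral_mul_const _ hg, mul_comm]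

lemma rpow_lintegral_Ioc_rpow_mul_le {γ p r : ℝ} (hγ : 0 < γ) (hp : 1 ≤ p) (hr : 0 ≤ r)
    {F : ℝ → ℝ≥0∞} (hF : Measurable F) :
    (∫⁻ t in Ioc 0 r, F t * ofReal (t ^ (γ - 1))) ^ p ≤
      ofReal (r ^ γ / γ) ^ (p - 1) *
        ∫⁻ t in Ioc 0 r, F t ^ p * ofReal (t ^ (γ - 1)) := by
  set w : ℝ → ℝ≥0∞ := fun t => ofReal (t ^ (γ - 1))
  have hw : Measurable w := by fun_prop
  have h := rpow_lintegral_le_measure_univ_mul_lintegral_rpow hp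
    (μ := (volume.restrict (Ioc 0 r)).withDensity w) hF.aemeasurable
  rw [lintegral_withDensity_eq_lintegral_mul _ hw hF,
    lintegral_withDensity_eq_lintegral_mul _ hw (hF.pow_const p), withDensity_apply _ .univ,
    Measure.restrict_univ, lintegral_Ioc_rpow (by linarith) hr, sub_add_cancel] at h
  simpa only [w, Pi.mul_apply, mul_comm] using h

lemma lintegral_hardy_le {γ p : ℝ} (hγ : 0 < γ) (hp : 1 ≤ p) {F : ℝ → ℝ≥0∞}
    (hF : Measurable F) :
    ∫⁻ r in Ioi 0, ofReal (r ^ (-1 : ℝ)) *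
        (ofReal (r ^ (-γ)) * ∫⁻ t in Ioc 0 r, F t * ofReal (t ^ (γ - 1))) ^ p ≤
      ofReal γ⁻¹ ^ p * ∫⁻ t in Ioi 0, ofReal (t ^ (-1 : ℝ)) * F t ^ p := by
  have hc : ofReal γ⁻¹ ^ (p - 1) ≠ ∞ :=
    ENNReal.rpow_ne_top_of_nonneg (by linarith) ENNReal.ofReal_ne_top
  have hpow {r : ℝ} (hr : 0 < r) (x : ℝ) : ofReal (r ^ x) = ofReal r ^ x :=
    (ENNReal.ofReal_rpow_of_pos hr).symm
  have hu {r : ℝ} (hr : 0 < r) : ofReal r ≠ 0 := by simpa using hr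
  calc ∫⁻ r in Ioi 0, ofReal (r ^ (-1 : ℝ)) *
        (ofReal (r ^ (-γ)) * ∫⁻ t in Ioc 0 r, F t * ofReal (t ^ (γ - 1))) ^ p
      ≤ ∫⁻ r in Ioi 0, ofReal γ⁻¹ ^ (p - 1) *
          (ofReal (r ^ (-γ - 1)) * ∫⁻ t in Ioc 0 r, F t ^ p * ofReal (t ^ (γ - 1))) := by
        refine setLIntegral_mono' measurableSet_Ioi fun r (hr : 0 < r) => ?_
        rw [ENNReal.mul_rpow_of_nonneg _ _ (by linarith)]
        grw [rpow_lintegral_Ioc_rpow_mul_le hγ hp hr.le hF]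
        rw [div_eq_mul_inv, ENNReal.ofReal_mul (Real.rpow_nonneg hr.le _), hpow hr, hpow hr,
          hpow hr, ENNReal.mul_rpow_of_nonneg _ _ (by linarith), ← ENNReal.rpow_mul,
          ← ENNReal.rpow_mul, hpow hr, show -γ - 1 = -1 + (-γ * p + γ * (p - 1)) by ring,
          ENNReal.rpow_add _ _ (hu hr) ENNReal.ofReal_ne_top,
          ENNReal.rpow_add _ _ (hu hr) ENNReal.ofReal_ne_top]
        exact le_of_eq (by ring)
    _ = ofReal γ⁻¹ ^ (p - 1) * ∫⁻ t in Ioi 0, F t ^ p * ofReal (t ^ (γ - 1)) *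
          ∫⁻ r in Ici t, ofReal (r ^ (-γ - 1)) := by
        rw [lintegral_const_mul' _ _ hc,
          lintegral_Ioi_mul_lintegral_Ioc _ (by fun_prop) (by fun_prop)]
    _ = ofReal γ⁻¹ ^ (p - 1) *
          ∫⁻ t in Ioi 0, ofReal γ⁻¹ * (ofReal (t ^ (-1 : ℝ)) * F t ^ p) := by
        congr 1
        refine setLIntegral_congr_fun measurableSet_Ioi fun t (ht : 0 < t) => ?_
        rw [← restrict_Ioi_eq_restrict_Ici, lintegral_Ioi_rpow (by linarith) ht,
          sub_add_cancel, neg_div_neg_eq, div_eq_mul_inv,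
          ENNReal.ofReal_mul (Real.rpow_nonneg ht.le _), hpow ht, hpow ht, hpow ht,
          show (-1 : ℝ) = γ - 1 + -γ by ring, ENNReal.rpow_add _ _ (hu ht) ENNReal.ofReal_ne_top]
        ring
    _ = ofReal γ⁻¹ ^ p * ∫⁻ t in Ioi 0, ofReal (t ^ (-1 : ℝ)) * F t ^ p := by
        rw [lintegral_const_mul' _ _ ENNReal.ofReal_ne_top, ← mul_assoc]
        congr 1
        conv_rhs => rw [← sub_add_cancel p 1,
          ENNReal.rpow_add_of_nonneg _ _ (by linarith) zero_le_one, ENNReal.rpow_one]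

lemma lintegral_powMeasure (D : ℝ) (g : ℝ → ℝ≥0∞) :
    ∫⁻ r, g r ∂powMeasure D = ∫⁻ r in Ioi 0, ofReal (r ^ (D - 1)) * g r :=
  lintegral_withDensity_eq_lintegral_mul_non_measurable _ (by fun_prop)
    (.of_forall fun _ => ENNReal.ofReal_lt_top) g

lemma eLpNorm_powMeasure_eq_of_eq_rpow_mul {p : ℝ} (hp : 0 < p) (D c : ℝ) {F G : ℝ → ℝ}
    (hFG : ∀ r, 0 < r → F r = r ^ c * G r) :
    eLpNorm F (ofReal p) (powMeasure D) =
      eLpNorm G (ofReal p) (powMeasure (D + c * p)) := by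
  have hp' : ofReal p ≠ 0 := by simpa using hp
  simp only [eLpNorm_eq_lintegral_rpow_enorm_toReal hp' ENNReal.ofReal_ne_top,
    ENNReal.toReal_ofReal hp.le, lintegral_powMeasure]
  congr 1
  refine setLIntegral_congr_fun measurableSet_Ioi fun r (hr : 0 < r) => ?_
  rw [hFG r hr, enorm_mul, Real.enorm_eq_ofReal (Real.rpow_nonneg hr.le _),
    ENNReal.mul_rpow_of_nonneg _ _ hp.le, ENNReal.ofReal_rpow_of_pos (Real.rpow_pos_of_pos hr _),
    ← mul_assoc, ← ENNReal.ofReal_mul (Real.rpow_nonneg hr.le _), ← Real.rpow_mul hr.le,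
    ← Real.rpow_add hr]
  ring_nf

/-- The Hardy operator normalised for the Haar measure `dr/r = powMeasure 0` of `(0, ∞)`. -/
noncomputable def hardyOp (γ : ℝ) (g : ℝ → ℝ) (r : ℝ) : ℝ :=
  r ^ (-γ) * ∫ t in Ioc 0 r, g t * t ^ (γ - 1)

lemma eLpNorm_hardyOp_le {γ p : ℝ} (hγ : 0 < γ) (hp : 1 ≤ p) {g : ℝ → ℝ} (hg : Measurable g) :
    eLpNorm (hardyOp γ g) (ofReal p) (powMeasure 0) ≤
      ofReal γ⁻¹ * eLpNorm g (ofReal p) (powMeasure 0) := by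
  have hp₀ : 0 < p := by linarith
  have hp' : ofReal p ≠ 0 := by simpa using hp₀
  simp only [eLpNorm_eq_lintegral_rpow_enorm_toReal hp' ENNReal.ofReal_ne_top,
    ENNReal.toReal_ofReal hp₀.le, lintegral_powMeasure, zero_sub]
  calc (∫⁻ r in Ioi 0, ofReal (r ^ (-1 : ℝ)) * ‖hardyOp γ g r‖ₑ ^ p) ^ (1 / p)
      ≤ (∫⁻ r in Ioi 0, ofReal (r ^ (-1 : ℝ)) * (ofReal (r ^ (-γ)) *
          ∫⁻ t in Ioc 0 r, ‖g t‖ₑ * ofReal (t ^ (γ - 1))) ^ p) ^ (1 / p) := by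
        gcongr ?_ ^ _
        refine setLIntegral_mono' measurableSet_Ioi fun r (hr : 0 < r) => ?_
        rw [hardyOp, enorm_mul, Real.enorm_eq_ofReal (Real.rpow_nonneg hr.le _)]
        gcongr
        refine (enorm_integral_le_lintegral_enorm _).trans_eq ?_
        refine setLIntegral_congr_fun measurableSet_Ioc fun t ht => ?_
        rw [enorm_mul, Real.enorm_eq_ofReal (Real.rpow_nonneg ht.1.le _)]
    _ ≤ (ofReal γ⁻¹ ^ p *
          ∫⁻ t in Ioi 0, ofReal (t ^ (-1 : ℝ)) * ‖g t‖ₑ ^ p) ^ (1 / p) := by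
        gcongr
        exact lintegral_hardy_le hγ hp hg.enorm
    _ = ofReal γ⁻¹ *
          (∫⁻ t in Ioi 0, ofReal (t ^ (-1 : ℝ)) * ‖g t‖ₑ ^ p) ^ (1 / p) := by
        rw [ENNReal.mul_rpow_of_nonneg _ _ (by positivity), ← ENNReal.rpow_mul,
          mul_one_div_cancel hp₀.ne', ENNReal.rpow_one]

lemma hardyOp_nonneg (γ : ℝ) {g : ℝ → ℝ} (hg : ∀ t, 0 < t → 0 ≤ g t) (r : ℝ) :
    0 ≤ hardyOp γ g r := by
  rcases le_or_gt r 0 with hr | hr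
  · simp [hardyOp, Ioc_eq_empty_of_le hr]
  · exact mul_nonneg (Real.rpow_nonneg hr.le _) <| setIntegral_nonneg measurableSet_Ioc
      fun t ht => mul_nonneg (hg t ht.1) (Real.rpow_nonneg ht.1.le _)

lemma inv_mul_le_hardyOp_indicator_Ioc_rpow {γ ε : ℝ} (hγ : 0 < γ) (hε : 0 < ε) (r : ℝ) :
    (γ + ε)⁻¹ * (Ioc 0 1).indicator (· ^ ε) r ≤ hardyOp γ ((Ioc 0 1).indicator (· ^ ε)) r := by
  by_cases hr : r ∈ Ioc (0 : ℝ) 1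
  · have hintegrand : ∀ t ∈ Ioc 0 r,
        (Ioc 0 1).indicator (· ^ ε) t * t ^ (γ - 1) = t ^ (γ + ε - 1) := fun t ht => by
      have ht₁ : t ∈ Ioc (0 : ℝ) 1 := ⟨ht.1, ht.2.trans hr.2⟩
      rw [indicator_of_mem ht₁, ← Real.rpow_add ht.1]
      ring_nf
    have hint : ∫ t in Ioc 0 r, (Ioc 0 1).indicator (· ^ ε) t * t ^ (γ - 1) =
        r ^ (γ + ε) / (γ + ε) := by
      rw [setIntegral_congr_fun measurableSet_Ioc hintegrand,
        ← intervalIntegral.integral_of_le hr.1.le, integral_rpow (Or.inl (by linarith)),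
        sub_add_cancel, Real.zero_rpow (by linarith), sub_zero]
    rw [hardyOp, hint, indicator_of_mem hr, mul_div_assoc', ← Real.rpow_add hr.1,
      neg_add_cancel_left, inv_mul_eq_div]
  · rw [indicator_of_notMem hr, mul_zero]
    exact hardyOp_nonneg γ
      (fun t _ => indicator_nonneg (fun t ht => Real.rpow_nonneg ht.1.le _) t) r

lemma eLpNorm_indicator_Ioc_rpow {ε p : ℝ} (hε : 0 < ε) (hp : 0 < p) :
    eLpNorm ((Ioc 0 1).indicator (· ^ ε)) (ofReal p) (powMeasure 0) =
      ofReal (ε * p)⁻¹ ^ (1 / p) := by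
  have hp' : ofReal p ≠ 0 := by simpa using hp
  rw [eLpNorm_eq_lintegral_rpow_enorm_toReal hp' ENNReal.ofReal_ne_top,
    ENNReal.toReal_ofReal hp.le, lintegral_powMeasure]
  congr 1
  calc ∫⁻ r in Ioi 0, ofReal (r ^ (0 - 1 : ℝ)) * ‖(Ioc 0 1).indicator (· ^ ε) r‖ₑ ^ p
      = ∫⁻ r in Ioi 0, (Ioc 0 1).indicator (fun r => ofReal (r ^ (ε * p - 1))) r := by
        refine setLIntegral_congr_fun measurableSet_Ioi fun r (hr : 0 < r) => ?_
        by_cases h : r ∈ Ioc (0 : ℝ) 1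
        · rw [indicator_of_mem h, indicator_of_mem h,
            Real.enorm_eq_ofReal (Real.rpow_nonneg hr.le _),
            ENNReal.ofReal_rpow_of_nonneg (Real.rpow_nonneg hr.le _) hp.le,
            ← ENNReal.ofReal_mul (Real.rpow_nonneg hr.le _), ← Real.rpow_mul hr.le,
            ← Real.rpow_add hr]
          ring_nf
        · rw [indicator_of_notMem h, indicator_of_notMem h, enorm_zero,
            ENNReal.zero_rpow_of_pos hp, mul_zero]
    _ = ofReal (ε * p)⁻¹ := by
        rw [setLIntegral_indicator measurableSet_Ioc, inter_eq_left.mpr Ioc_subset_Ioi_self,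
          lintegral_Ioc_rpow (by nlinarith) zero_le_one, sub_add_cancel, Real.one_rpow, one_div]

lemma ofReal_inv_le_of_eLpNorm_hardyOp_le {γ p : ℝ} (hγ : 0 < γ) (hp : 0 < p) {C : ℝ≥0∞}
    (hC : ∀ g : ℝ → ℝ, Measurable g →
      eLpNorm (hardyOp γ g) (ofReal p) (powMeasure 0) ≤
        C * eLpNorm g (ofReal p) (powMeasure 0)) :
    ofReal γ⁻¹ ≤ C := by
  have hlim : Filter.Tendsto (fun ε => ofReal (γ + ε)⁻¹) (nhdsWithin 0 (Ioi 0))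
      (nhds (ofReal γ⁻¹)) := by
    refine Filter.Tendsto.mono_left ?_ nhdsWithin_le_nhds
    have hcont : ContinuousAt (fun ε : ℝ => (γ + ε)⁻¹) 0 :=
      (continuousAt_const.add continuousAt_id).inv₀ (by simpa using hγ.ne')
    simpa using ENNReal.tendsto_ofReal hcont.tendsto
  refine le_of_tendsto hlim <| eventually_nhdsWithin_of_forall fun ε (hε : 0 < ε) => ?_
  set g : ℝ → ℝ := (Ioc 0 1).indicator (· ^ ε)
  have hg_norm := eLpNorm_indicator_Ioc_rpow hε hp
  have hg₀ : eLpNorm g (ofReal p) (powMeasure 0) ≠ 0 := by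
    rw [hg_norm]
    exact (ENNReal.rpow_pos (ENNReal.ofReal_pos.mpr (by positivity)) ENNReal.ofReal_ne_top).ne'
  have hg_top : eLpNorm g (ofReal p) (powMeasure 0) ≠ ∞ := by
    rw [hg_norm]
    exact ENNReal.rpow_ne_top_of_nonneg (by positivity) ENNReal.ofReal_ne_top
  refine (ENNReal.mul_le_mul_iff_left hg₀ hg_top).mp ?_
  calc ofReal (γ + ε)⁻¹ * eLpNorm g (ofReal p) (powMeasure 0)
      = eLpNorm ((γ + ε)⁻¹ • g) (ofReal p) (powMeasure 0) := by
        rw [eLpNorm_const_smul, Real.enorm_eq_ofReal (by positivity)]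
    _ ≤ eLpNorm (hardyOp γ g) (ofReal p) (powMeasure 0) := by
        refine eLpNorm_mono_real fun r => ?_
        have hg : 0 ≤ g r := indicator_nonneg (fun t ht => Real.rpow_nonneg ht.1.le _) r
        rw [Pi.smul_apply, smul_eq_mul, Real.norm_of_nonneg (by positivity)]
        exact inv_mul_le_hardyOp_indicator_Ioc_rpow hγ hε r
    _ ≤ C * eLpNorm g (ofReal p) (powMeasure 0) :=
        hC g (measurable_id.pow_const ε |>.indicator measurableSet_Ioc)

lemma eLpNorm_rpow_mul_eq_eLpNorm_powMeasure_zero {D p b : ℝ} (hp : 0 < p) {f g : ℝ → ℝ}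
    (hfg : ∀ t, 0 < t → g t = t ^ (b + D / p) * f t) :
    eLpNorm (fun r => r ^ b * f r) (ofReal p) (powMeasure D) =
      eLpNorm g (ofReal p) (powMeasure 0) := by
  convert eLpNorm_powMeasure_eq_of_eq_rpow_mul hp D (-(D / p)) fun r hr => ?_ using 3
  · field_simp; ring
  · rw [hfg r hr, ← mul_assoc, ← Real.rpow_add hr]
    ring_nf

lemma eLpNorm_hardy_eq_eLpNorm_hardyOp {D p a b : ℝ} (hp : 0 < p) (hab : a + b = D)
    {f g : ℝ → ℝ} (hfg : ∀ t, 0 < t → g t = t ^ (b + D / p) * f t) :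
    eLpNorm (fun r => r ^ (-a) * ∫ t in Ioc 0 r, f t * t ^ (D - 1)) (ofReal p)
        (powMeasure D) =
      eLpNorm (hardyOp (a - D / p) g) (ofReal p) (powMeasure 0) := by
  convert eLpNorm_powMeasure_eq_of_eq_rpow_mul hp D (-(D / p)) fun r hr => ?_ using 3
  · field_simp; ring
  · have hint : ∫ t in Ioc 0 r, f t * t ^ (D - 1) = ∫ t in Ioc 0 r, g t * t ^ (a - D / p - 1) :=
      setIntegral_congr_fun measurableSet_Ioc fun t ht => by
        rw [hfg t ht.1, mul_comm _ (f t), mul_assoc, ← Real.rpow_add ht.1, ← hab]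
        ring_nf
    rw [hardyOp, hint, ← mul_assoc, ← Real.rpow_add hr]
    ring_nf

theorem hardy_sharp_general (D p a b : ℝ) (hp : 1 < p)
    (hab : b / p < a / (p / (p - 1))) (hsum : a + b = D) :
    (∀ f : ℝ → ℝ, Measurable f →
      eLpNorm (fun r => r ^ (-a) * ∫ t in Set.Ioc (0 : ℝ) r, f t * t ^ (D - 1))
          (ENNReal.ofReal p) (powMeasure D) ≤
        ENNReal.ofReal (a / (p / (p - 1)) - b / p)⁻¹ *
          eLpNorm (fun r => r ^ b * f r) (ENNReal.ofReal p) (powMeasure D)) ∧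
    (∀ C : ℝ≥0∞,
      (∀ f : ℝ → ℝ, Measurable f →
        eLpNorm (fun r => r ^ (-a) * ∫ t in Set.Ioc (0 : ℝ) r, f t * t ^ (D - 1))
            (ENNReal.ofReal p) (powMeasure D) ≤
          C * eLpNorm (fun r => r ^ b * f r) (ENNReal.ofReal p) (powMeasure D)) →
      ENNReal.ofReal (a / (p / (p - 1)) - b / p)⁻¹ ≤ C) := by
  have hp₀ : 0 < p := by linarith
  have hγ_eq : a / (p / (p - 1)) - b / p = a - D / p := by
    rw [← hsum]; field_simp; ring
  have hγ : 0 < a - D / p := by linarith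
  rw [hγ_eq]
  refine ⟨fun f hf => ?_, fun C hC => ?_⟩
  · set g : ℝ → ℝ := fun t => t ^ (b + D / p) * f t
    have hfg : ∀ t, 0 < t → g t = t ^ (b + D / p) * f t := fun _ _ => rfl
    rw [eLpNorm_hardy_eq_eLpNorm_hardyOp hp₀ hsum hfg,
      eLpNorm_rpow_mul_eq_eLpNorm_powMeasure_zero hp₀ hfg]
    exact eLpNorm_hardyOp_le hγ hp.le (by fun_prop)
  · refine ofReal_inv_le_of_eLpNorm_hardyOp_le hγ hp₀ fun g hg => ?_
    have hfg (t : ℝ) (ht : 0 < t) : g t = t ^ (b + D / p) * (t ^ (-(b + D / p)) * g t) := by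
      rw [← mul_assoc, ← Real.rpow_add ht, add_neg_cancel, Real.rpow_zero, one_mul]
    rw [← eLpNorm_hardy_eq_eLpNorm_hardyOp hp₀ hsum hfg,
      ← eLpNorm_rpow_mul_eq_eLpNorm_powMeasure_zero hp₀ hfg]
    exact hC _ (by fun_prop)

/-- One-dimensional sharp Hardy inequality: for `1 < p < ∞`, `a/p' > b/p`, `a + b = D > 0`,
with `Hf(r) = ∫₀^r f(t) t^{D-1} dt`, one has
`‖r^{-a} Hf‖_{L^p(r^{D-1}dr)} ≤ C ‖r^b f‖_{L^p(r^{D-1}dr)}` with the sharp constant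
`C = (a/p' - b/p)⁻¹`. -/
theorem hardy_sharp (D p a b : ℝ) (hD : 0 < D) (hp : 1 < p)
    (hab : b / p < a / (p / (p - 1))) (hsum : a + b = D) :
    (∀ f : ℝ → ℝ, Measurable f →
      eLpNorm (fun r => r ^ (-a) * ∫ t in Set.Ioc (0 : ℝ) r, f t * t ^ (D - 1))
          (ENNReal.ofReal p) (powMeasure D) ≤
        ENNReal.ofReal (a / (p / (p - 1)) - b / p)⁻¹ *
          eLpNorm (fun r => r ^ b * f r) (ENNReal.ofReal p) (powMeasure D)) ∧
    (∀ C : ℝ≥0∞,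
      (∀ f : ℝ → ℝ, Measurable f →
        eLpNorm (fun r => r ^ (-a) * ∫ t in Set.Ioc (0 : ℝ) r, f t * t ^ (D - 1))
            (ENNReal.ofReal p) (powMeasure D) ≤
          C * eLpNorm (fun r => r ^ b * f r) (ENNReal.ofReal p) (powMeasure D)) →
      ENNReal.ofReal (a / (p / (p - 1)) - b / p)⁻¹ ≤ C) :=
  hardy_sharp_general D p a b hp hab hsum
end

section
/- One-dimensional sharp Bellman (dual Hardy) inequality: let 1 < p < ∞ and a, b ∈ ℝ with a/p' < b/p and a + b = D > 0. Define Bf(r) = ∫_r^∞ f(t) t^{D-1} dt. Then ‖r^{-a} Bf(r)‖_{L^p((0,∞), r^{D-1}dr)} ≤ C ‖r^b f(r)‖_{L^p((0,∞), r^{D-1}dr)} with sharp constant C = (b/p − a/p')^{-1}. -/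
/-!
Put `κ = b/p - a/p' = D/p - a`. Bounding `|Bf(r)|` by `∫_r^∞ g` with `g(t) = |f(t)| t^{D-1}`
reduces the inequality to the dual Hardy inequality
`∫₀^∞ r^{κp-1} (∫_r^∞ g)^p dr ≤ κ^{-p} ∫₀^∞ t^{(κ+1)p-1} g^p dt`.
That one follows from Hölder's inequality on `(r, ∞)` after splitting `g = t^{-β} · t^β g` with
`β = (1+κ)/p'`, since `∫_r^∞ t^{-βp'} dt = r^{-κ}/κ`, and then Tonelli on the triangle `0 < r < t`.

For sharpness, take `f(t) = t^{-(D+s)}` on `(1, ∞)` with `s > κ`: then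
`r^{-a} Bf(r) = s⁻¹ r^b f(r)` for `r > 1`, and `r^b f` has finite nonzero norm, so every admissible
constant is at least `s⁻¹`.
-/

open MeasureTheory Set
open scoped ENNReal

open Filter Topology

lemma ENNReal.ofReal_rpow_mul_ofReal_rpow {r : ℝ} (hr : 0 < r) (x y : ℝ) :
    ENNReal.ofReal (r ^ x) * ENNReal.ofReal (r ^ y) = ENNReal.ofReal (r ^ (x + y)) := by
  rw [← ENNReal.ofReal_mul (Real.rpow_nonneg hr.le x), ← Real.rpow_add hr]

lemma ENNReal.ofReal_rpow_rpow {r : ℝ} (hr : 0 < r) (x y : ℝ) :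
    ENNReal.ofReal (r ^ x) ^ y = ENNReal.ofReal (r ^ (x * y)) := by
  rw [ENNReal.ofReal_rpow_of_pos (Real.rpow_pos_of_pos hr x), ← Real.rpow_mul hr.le]

lemma enorm_rpow_mul {r : ℝ} (hr : 0 ≤ r) (x y : ℝ) :
    ‖r ^ x * y‖ₑ = ENNReal.ofReal (r ^ x) * ‖y‖ₑ := by
  rw [enorm_mul, Real.enorm_eq_ofReal (Real.rpow_nonneg hr x)]

lemma ENNReal.rpow_add_one {x : ℝ≥0∞} (h0 : x ≠ 0) (htop : x ≠ ∞) (y : ℝ) :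
    x ^ (y + 1) = x ^ y * x := by
  rw [ENNReal.rpow_add _ _ h0 htop, ENNReal.rpow_one]

lemma lintegral_Ioi_rpow_of_lt {c r : ℝ} (hc : c < -1) (hr : 0 < r) :
    ∫⁻ t in Ioi r, ENNReal.ofReal (t ^ c) = ENNReal.ofReal (-r ^ (c + 1) / (c + 1)) := by
  rw [← integral_Ioi_rpow_of_lt hc hr, ofReal_integral_eq_lintegral_ofReal
    (integrableOn_Ioi_rpow_of_lt hc hr)]
  exact (ae_restrict_iff' measurableSet_Ioi).2 (ae_of_all _ fun t ht =>
    Real.rpow_nonneg (hr.trans ht).le c)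

lemma lintegral_Ioo_zero_rpow {c t : ℝ} (hc : -1 < c) (ht : 0 < t) :
    ∫⁻ r in Ioo 0 t, ENNReal.ofReal (r ^ c) = ENNReal.ofReal (t ^ (c + 1) / (c + 1)) := by
  have hint : IntegrableOn (fun r : ℝ => r ^ c) (Ioo 0 t) :=
    (intervalIntegrable_iff_integrableOn_Ioo_of_le ht.le).1
      (intervalIntegral.intervalIntegrable_rpow' hc)
  rw [← ofReal_integral_eq_lintegral_ofReal hint ((ae_restrict_iff' measurableSet_Ioo).2
    (ae_of_all _ fun r hr => Real.rpow_nonneg hr.1.le c)), ← integral_Ioc_eq_integral_Ioo,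
    ← intervalIntegral.integral_of_le ht.le, integral_rpow (Or.inl hc),
    Real.zero_rpow (by linarith), sub_zero]

lemma lintegral_Ioi_lintegral_Ioi_swap {F : ℝ → ℝ → ℝ≥0∞}
    (hF : Measurable (Function.uncurry F)) :
    ∫⁻ r in Ioi 0, ∫⁻ t in Ioi r, F r t = ∫⁻ t in Ioi 0, ∫⁻ r in Ioo 0 t, F r t := by
  have hF' : Measurable (Function.uncurry fun r t => (Ioi r).indicator (F r) t) := by
    convert hF.indicator (measurableSet_lt measurable_fst measurable_snd) using 1
    ext ⟨r, t⟩
    by_cases h : r < t <;> simp [Function.uncurry, indicator, h]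
  calc ∫⁻ r in Ioi 0, ∫⁻ t in Ioi r, F r t
      = ∫⁻ r in Ioi 0, ∫⁻ t in Ioi 0, (Ioi r).indicator (F r) t := by
        refine setLIntegral_congr_fun measurableSet_Ioi fun r hr => ?_
        rw [lintegral_indicator measurableSet_Ioi, Measure.restrict_restrict measurableSet_Ioi,
          inter_eq_self_of_subset_left (Ioi_subset_Ioi (le_of_lt hr))]
    _ = ∫⁻ t in Ioi 0, ∫⁻ r in Ioi 0, (Iio t).indicator (fun r => F r t) r := by
        rw [lintegral_lintegral_swap hF'.aemeasurable]
        congr! 3 with t r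
    _ = ∫⁻ t in Ioi 0, ∫⁻ r in Ioo 0 t, F r t := by
        refine lintegral_congr fun t => ?_
        rw [lintegral_indicator measurableSet_Iio, Measure.restrict_restrict measurableSet_Iio,
          Iio_inter_Ioi]

lemma eLpNorm_powMeasure (D : ℝ) {p : ℝ} (hp : 0 < p) (h : ℝ → ℝ) :
    eLpNorm h (ENNReal.ofReal p) (powMeasure D) =
      (∫⁻ r in Ioi 0, ENNReal.ofReal (r ^ (D - 1)) * ‖h r‖ₑ ^ p) ^ (1 / p) := by
  rw [eLpNorm_eq_lintegral_rpow_enorm_toReal (by simpa using hp) ENNReal.ofReal_ne_top,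
    ENNReal.toReal_ofReal hp.le, powMeasure, lintegral_withDensity_eq_lintegral_mul_non_measurable
      _ (by fun_prop) (ae_of_all _ fun r => ENNReal.ofReal_lt_top)]
  rfl

lemma lintegral_Ioi_le_of_holder {p κ r : ℝ} (hp : 1 < p) (hκ : 0 < κ) (hr : 0 < r)
    {g : ℝ → ℝ≥0∞} (hg : Measurable g) :
    ∫⁻ t in Ioi r, g t ≤ (ENNReal.ofReal κ⁻¹ * ENNReal.ofReal (r ^ (-κ))) ^ ((p - 1) / p) *
      (∫⁻ t in Ioi r, ENNReal.ofReal (t ^ ((1 + κ) * (p - 1))) * g t ^ p) ^ (1 / p) := by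
  have hp0 : 0 < p := by linarith
  set β := (1 + κ) * (p - 1) / p
  have hconj : (p / (p - 1)).HolderConjugate p :=
    ((Real.holderConjugate_iff_eq_conjExponent hp).2 rfl).symm
  have split : ∀ t ∈ Ioi r,
      g t = ENNReal.ofReal (t ^ (-β)) * (ENNReal.ofReal (t ^ β) * g t) := fun t ht => by
    rw [← mul_assoc, ENNReal.ofReal_rpow_mul_ofReal_rpow (hr.trans ht), neg_add_cancel,
      Real.rpow_zero, ENNReal.ofReal_one, one_mul]
  have weight : ∫⁻ t in Ioi r, ENNReal.ofReal (t ^ (-β)) ^ (p / (p - 1)) =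
      ENNReal.ofReal κ⁻¹ * ENNReal.ofReal (r ^ (-κ)) := by
    have hexp : -β * (p / (p - 1)) = -(1 + κ) := by
      have : p - 1 ≠ 0 := by linarith
      simp only [β]
      field_simp
    rw [setLIntegral_congr_fun measurableSet_Ioi fun t ht => by
      rw [ENNReal.ofReal_rpow_rpow (hr.trans ht), hexp],
      lintegral_Ioi_rpow_of_lt (by linarith) hr, ← ENNReal.ofReal_mul (by positivity)]
    congr 1
    ring_nf
  have power : ∀ t ∈ Ioi r, (ENNReal.ofReal (t ^ β) * g t) ^ p =
      ENNReal.ofReal (t ^ ((1 + κ) * (p - 1))) * g t ^ p := fun t ht => by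
    rw [ENNReal.mul_rpow_of_nonneg _ _ hp0.le, ENNReal.ofReal_rpow_rpow (hr.trans ht),
      div_mul_cancel₀ _ hp0.ne']
  calc ∫⁻ t in Ioi r, g t
      = ∫⁻ t in Ioi r, ENNReal.ofReal (t ^ (-β)) * (ENNReal.ofReal (t ^ β) * g t) :=
        setLIntegral_congr_fun measurableSet_Ioi split
    _ ≤ _ := ENNReal.lintegral_mul_le_Lp_mul_Lq _ hconj (by fun_prop) (by fun_prop)
    _ = _ := by
        rw [weight, one_div_div, setLIntegral_congr_fun measurableSet_Ioi power]

theorem lintegral_rpow_lintegral_Ioi_le {p κ : ℝ} (hp : 1 < p) (hκ : 0 < κ)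
    {g : ℝ → ℝ≥0∞} (hg : Measurable g) :
    ∫⁻ r in Ioi 0, ENNReal.ofReal (r ^ (κ * p - 1)) * (∫⁻ t in Ioi r, g t) ^ p ≤
      ENNReal.ofReal κ⁻¹ ^ p *
        ∫⁻ t in Ioi 0, ENNReal.ofReal (t ^ ((κ + 1) * p - 1)) * g t ^ p := by
  have hp0 : 0 < p := by linarith
  set c := ENNReal.ofReal κ⁻¹
  set H : ℝ → ℝ≥0∞ := fun t => ENNReal.ofReal (t ^ ((1 + κ) * (p - 1))) * g t ^ p
  have pointwise : ∀ r ∈ Ioi (0 : ℝ),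
      ENNReal.ofReal (r ^ (κ * p - 1)) * (∫⁻ t in Ioi r, g t) ^ p ≤
        c ^ (p - 1) * ∫⁻ t in Ioi r, ENNReal.ofReal (r ^ (κ - 1)) * H t := fun r hr => by
    calc ENNReal.ofReal (r ^ (κ * p - 1)) * (∫⁻ t in Ioi r, g t) ^ p
        ≤ ENNReal.ofReal (r ^ (κ * p - 1)) * ((c * ENNReal.ofReal (r ^ (-κ))) ^ ((p - 1) / p) *
            (∫⁻ t in Ioi r, H t) ^ (1 / p)) ^ p := by
          gcongr
          exact lintegral_Ioi_le_of_holder hp hκ hr hg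
      _ = c ^ (p - 1) * ∫⁻ t in Ioi r, ENNReal.ofReal (r ^ (κ - 1)) * H t := by
          rw [lintegral_const_mul' _ _ ENNReal.ofReal_ne_top, ENNReal.mul_rpow_of_nonneg _ _
            hp0.le, ← ENNReal.rpow_mul, ← ENNReal.rpow_mul, div_mul_cancel₀ _ hp0.ne',
            one_div_mul_cancel hp0.ne', ENNReal.rpow_one, ENNReal.mul_rpow_of_nonneg _ _
            (by linarith), ENNReal.ofReal_rpow_rpow hr]
          rw [show κ - 1 = κ * p - 1 + -κ * (p - 1) by ring,
            ← ENNReal.ofReal_rpow_mul_ofReal_rpow hr]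
          ring
  have inner : ∀ t ∈ Ioi (0 : ℝ), ∫⁻ r in Ioo 0 t, ENNReal.ofReal (r ^ (κ - 1)) * H t =
      c * (ENNReal.ofReal (t ^ ((κ + 1) * p - 1)) * g t ^ p) := fun t ht => by
    rw [lintegral_mul_const _ (by fun_prop), lintegral_Ioo_zero_rpow (by linarith) ht]
    simp only [H]
    rw [sub_add_cancel, div_eq_inv_mul, ENNReal.ofReal_mul (by positivity), mul_assoc,
      ← mul_assoc (ENNReal.ofReal (t ^ κ)), ENNReal.ofReal_rpow_mul_ofReal_rpow ht,
      show κ + (1 + κ) * (p - 1) = (κ + 1) * p - 1 by ring]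
  calc ∫⁻ r in Ioi 0, ENNReal.ofReal (r ^ (κ * p - 1)) * (∫⁻ t in Ioi r, g t) ^ p
      ≤ ∫⁻ r in Ioi 0, c ^ (p - 1) * ∫⁻ t in Ioi r, ENNReal.ofReal (r ^ (κ - 1)) * H t :=
        setLIntegral_mono' measurableSet_Ioi pointwise
    _ = c ^ (p - 1) * ∫⁻ t in Ioi 0, ∫⁻ r in Ioo 0 t, ENNReal.ofReal (r ^ (κ - 1)) * H t := by
        rw [lintegral_const_mul' _ _ (by finiteness),
          lintegral_Ioi_lintegral_Ioi_swap (by fun_prop)]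
    _ = c ^ p * ∫⁻ t in Ioi 0, ENNReal.ofReal (t ^ ((κ + 1) * p - 1)) * g t ^ p := by
        rw [setLIntegral_congr_fun measurableSet_Ioi inner, lintegral_const_mul _ (by fun_prop),
          ← mul_assoc, ← ENNReal.rpow_add_one (by simpa [c]) (by simp [c]), sub_add_cancel]

noncomputable def bellmanOp (D : ℝ) (f : ℝ → ℝ) (r : ℝ) : ℝ :=
  ∫ t in Ioi r, f t * t ^ (D - 1)

lemma enorm_bellmanOp_le (D : ℝ) (f : ℝ → ℝ) {r : ℝ} (hr : 0 ≤ r) :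
    ‖bellmanOp D f r‖ₑ ≤ ∫⁻ t in Ioi r, ‖f t‖ₑ * ENNReal.ofReal (t ^ (D - 1)) := by
  refine (enorm_integral_le_lintegral_enorm _).trans_eq
    (setLIntegral_congr_fun measurableSet_Ioi fun t ht => ?_)
  rw [mul_comm, enorm_rpow_mul (hr.trans (le_of_lt ht)), mul_comm]

theorem eLpNorm_rpow_mul_bellmanOp_le {D p a b : ℝ} (hp : 1 < p) (hsum : a + b = D)
    (hκ : 0 < D / p - a) {f : ℝ → ℝ} (hf : Measurable f) :
    eLpNorm (fun r => r ^ (-a) * bellmanOp D f r) (ENNReal.ofReal p) (powMeasure D) ≤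
      ENNReal.ofReal (D / p - a)⁻¹ *
        eLpNorm (fun r => r ^ b * f r) (ENNReal.ofReal p) (powMeasure D) := by
  have hp0 : 0 < p := by linarith
  set κ := D / p - a
  set g : ℝ → ℝ≥0∞ := fun t => ‖f t‖ₑ * ENNReal.ofReal (t ^ (D - 1))
  have lhs : ∀ r ∈ Ioi (0 : ℝ), ENNReal.ofReal (r ^ (D - 1)) * ‖r ^ (-a) * bellmanOp D f r‖ₑ ^ p ≤
      ENNReal.ofReal (r ^ (κ * p - 1)) * (∫⁻ t in Ioi r, g t) ^ p := fun r hr => by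
    calc ENNReal.ofReal (r ^ (D - 1)) * ‖r ^ (-a) * bellmanOp D f r‖ₑ ^ p
        ≤ ENNReal.ofReal (r ^ (D - 1)) * (ENNReal.ofReal (r ^ (-a)) * ∫⁻ t in Ioi r, g t) ^ p := by
          rw [enorm_rpow_mul (le_of_lt hr)]
          gcongr
          exact enorm_bellmanOp_le D f (le_of_lt hr)
      _ = ENNReal.ofReal (r ^ (κ * p - 1)) * (∫⁻ t in Ioi r, g t) ^ p := by
          rw [ENNReal.mul_rpow_of_nonneg _ _ hp0.le, ENNReal.ofReal_rpow_rpow hr, ← mul_assoc,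
            ENNReal.ofReal_rpow_mul_ofReal_rpow hr]
          congr 3
          simp only [κ]
          field_simp
          ring
  have rhs : ∀ t ∈ Ioi (0 : ℝ), ENNReal.ofReal (t ^ ((κ + 1) * p - 1)) * g t ^ p =
      ENNReal.ofReal (t ^ (D - 1)) * ‖t ^ b * f t‖ₑ ^ p := fun t ht => by
    rw [enorm_rpow_mul (le_of_lt ht), ENNReal.mul_rpow_of_nonneg _ _ hp0.le,
      ENNReal.mul_rpow_of_nonneg _ _ hp0.le, ENNReal.ofReal_rpow_rpow ht,
      ENNReal.ofReal_rpow_rpow ht, mul_comm (‖f t‖ₑ ^ p), ← mul_assoc, ← mul_assoc,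
      ENNReal.ofReal_rpow_mul_ofReal_rpow ht, ENNReal.ofReal_rpow_mul_ofReal_rpow ht]
    congr 3
    simp only [κ]
    field_simp
    linear_combination (-p) * hsum
  rw [eLpNorm_powMeasure D hp0, eLpNorm_powMeasure D hp0]
  calc (∫⁻ r in Ioi 0, ENNReal.ofReal (r ^ (D - 1)) * ‖r ^ (-a) * bellmanOp D f r‖ₑ ^ p) ^ (1 / p)
      ≤ (∫⁻ r in Ioi 0, ENNReal.ofReal (r ^ (κ * p - 1)) * (∫⁻ t in Ioi r, g t) ^ p) ^ (1 / p) :=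
        ENNReal.rpow_le_rpow (setLIntegral_mono' measurableSet_Ioi lhs) (by positivity)
    _ ≤ (ENNReal.ofReal κ⁻¹ ^ p *
          ∫⁻ t in Ioi 0, ENNReal.ofReal (t ^ ((κ + 1) * p - 1)) * g t ^ p) ^ (1 / p) :=
        ENNReal.rpow_le_rpow (lintegral_rpow_lintegral_Ioi_le hp hκ (by fun_prop)) (by positivity)
    _ = _ := by
        rw [setLIntegral_congr_fun measurableSet_Ioi rhs, ENNReal.mul_rpow_of_nonneg _ _
          (by positivity), ← ENNReal.rpow_mul, mul_one_div_cancel hp0.ne', ENNReal.rpow_one]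

lemma bellmanOp_indicator_rpow {D s r : ℝ} (hs : 0 < s) (hr : 1 ≤ r) :
    bellmanOp D ((Ioi 1).indicator fun t => t ^ (-(D + s))) r = r ^ (-s) / s := by
  have hr0 : 0 < r := by linarith
  rw [bellmanOp, setIntegral_congr_fun measurableSet_Ioi (g := fun t => t ^ (-s - 1))
    fun t (ht : r < t) => by
      rw [indicator_of_mem (show t ∈ Ioi 1 from hr.trans_lt ht), ← Real.rpow_add (hr0.trans ht)]
      ring_nf,
    integral_Ioi_rpow_of_lt (by linarith) hr0, sub_add_cancel, neg_div_neg_eq]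

lemma eLpNorm_rpow_mul_indicator_rpow {D p b s : ℝ} (hp : 0 < p) (h : (b - D - s) * p + D < 0) :
    eLpNorm (fun r => r ^ b * (Ioi 1).indicator (fun t => t ^ (-(D + s))) r)
        (ENNReal.ofReal p) (powMeasure D) =
      ENNReal.ofReal (-1 / ((b - D - s) * p + D)) ^ (1 / p) := by
  set e := (b - D - s) * p + D
  have integrand : ∀ r ∈ Ioi (0 : ℝ), ENNReal.ofReal (r ^ (D - 1)) *
      ‖r ^ b * (Ioi 1).indicator (fun t => t ^ (-(D + s))) r‖ₑ ^ p =
        (Ioi 1).indicator (fun r => ENNReal.ofReal (r ^ (e - 1))) r := fun r hr => by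
    by_cases hr1 : r ∈ Ioi 1
    · rw [indicator_of_mem hr1, indicator_of_mem hr1, ← Real.rpow_add hr,
        Real.enorm_eq_ofReal (Real.rpow_nonneg (le_of_lt hr) _), ENNReal.ofReal_rpow_rpow hr,
        ENNReal.ofReal_rpow_mul_ofReal_rpow hr]
      congr 2
      ring
    · simp [indicator_of_notMem hr1, ENNReal.zero_rpow_of_pos hp]
  rw [eLpNorm_powMeasure D hp, setLIntegral_congr_fun measurableSet_Ioi integrand,
    lintegral_indicator measurableSet_Ioi, Measure.restrict_restrict measurableSet_Ioi,
    inter_eq_self_of_subset_left (Ioi_subset_Ioi zero_le_one),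
    lintegral_Ioi_rpow_of_lt (by linarith) one_pos, Real.one_rpow, sub_add_cancel]

lemma ofReal_inv_le_of_bellmanOp_bound {D p a b s : ℝ} {C : ℝ≥0∞} (hp : 1 < p)
    (hsum : a + b = D)
    (hC : ∀ f : ℝ → ℝ, Measurable f →
      eLpNorm (fun r => r ^ (-a) * bellmanOp D f r) (ENNReal.ofReal p) (powMeasure D) ≤
        C * eLpNorm (fun r => r ^ b * f r) (ENNReal.ofReal p) (powMeasure D))
    (hs0 : 0 < s) (hs : D / p - a < s) :
    ENNReal.ofReal s⁻¹ ≤ C := by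
  have hp0 : 0 < p := by linarith
  set f : ℝ → ℝ := (Ioi 1).indicator fun t => t ^ (-(D + s))
  set N := eLpNorm (fun r => r ^ b * f r) (ENNReal.ofReal p) (powMeasure D)
  have hexp : (b - D - s) * p + D < 0 := by
    have : (b - D - s) * p + D = (D / p - a - s) * p := by
      rw [← hsum]
      field_simp
      ring
    rw [this]
    exact mul_neg_of_neg_of_pos (by linarith) hp0
  have hN : N = _ := eLpNorm_rpow_mul_indicator_rpow hp0 hexp
  have hN0 : N ≠ 0 := by
    rw [hN]
    exact (ENNReal.rpow_pos (by simpa using div_pos_of_neg_of_neg (by norm_num) hexp)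
      ENNReal.ofReal_ne_top).ne'
  have hNtop : N ≠ ∞ := by
    rw [hN]
    exact ENNReal.rpow_ne_top_of_nonneg (by positivity) ENNReal.ofReal_ne_top
  have tail : (Ioi 1).indicator (fun r => r ^ (-a) * bellmanOp D f r) =
      s⁻¹ • fun r => r ^ b * f r := by
    ext r
    by_cases hr : r ∈ Ioi 1
    · have hr0 : 0 < r := lt_trans one_pos hr
      rw [indicator_of_mem hr, bellmanOp_indicator_rpow hs0 (le_of_lt hr), Pi.smul_apply,
        smul_eq_mul, show f r = r ^ (-(D + s)) from indicator_of_mem hr _, ← Real.rpow_add hr0,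
        show b + -(D + s) = -a + -s by linarith, Real.rpow_add hr0]
      ring
    · simp [indicator_of_notMem hr, f]
  have hmul : ENNReal.ofReal s⁻¹ * N ≤ C * N :=
    calc ENNReal.ofReal s⁻¹ * N = eLpNorm (s⁻¹ • fun r => r ^ b * f r) (ENNReal.ofReal p)
          (powMeasure D) := by
          rw [eLpNorm_const_smul, Real.enorm_eq_ofReal (by positivity)]
      _ ≤ eLpNorm (fun r => r ^ (-a) * bellmanOp D f r) (ENNReal.ofReal p) (powMeasure D) := by
          rw [← tail]
          exact eLpNorm_indicator_le _
      _ ≤ C * N := hC f (Measurable.indicator (by fun_prop) measurableSet_Ioi)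
  exact (ENNReal.mul_le_mul_iff_left hN0 hNtop).1 hmul

lemma ENNReal.ofReal_inv_le_of_forall_lt {κ : ℝ} {C : ℝ≥0∞} (hκ : 0 < κ)
    (h : ∀ s, κ < s → ENNReal.ofReal s⁻¹ ≤ C) : ENNReal.ofReal κ⁻¹ ≤ C :=
  le_of_tendsto (x := 𝓝[>] κ) ((ENNReal.continuous_ofReal.tendsto _).comp
    ((tendsto_inv₀ hκ.ne').mono_left nhdsWithin_le_nhds))
    (eventually_nhdsWithin_of_forall h)

theorem bellman_sharp_general (D p a b : ℝ) (hp : 1 < p)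
    (hab : a / (p / (p - 1)) < b / p) (hsum : a + b = D) :
    (∀ f : ℝ → ℝ, Measurable f →
      eLpNorm (fun r => r ^ (-a) * ∫ t in Set.Ioi r, f t * t ^ (D - 1))
          (ENNReal.ofReal p) (powMeasure D) ≤
        ENNReal.ofReal (b / p - a / (p / (p - 1)))⁻¹ *
          eLpNorm (fun r => r ^ b * f r) (ENNReal.ofReal p) (powMeasure D)) ∧
    (∀ C : ℝ≥0∞,
      (∀ f : ℝ → ℝ, Measurable f →
        eLpNorm (fun r => r ^ (-a) * ∫ t in Set.Ioi r, f t * t ^ (D - 1))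
            (ENNReal.ofReal p) (powMeasure D) ≤
          C * eLpNorm (fun r => r ^ b * f r) (ENNReal.ofReal p) (powMeasure D)) →
      ENNReal.ofReal (b / p - a / (p / (p - 1)))⁻¹ ≤ C) := by
  have hκ : b / p - a / (p / (p - 1)) = D / p - a := by
    have : p - 1 ≠ 0 := by linarith
    field_simp
    linear_combination hsum
  have hκ0 : 0 < D / p - a := hκ ▸ sub_pos.2 hab
  rw [hκ]
  exact ⟨fun f hf => eLpNorm_rpow_mul_bellmanOp_le hp hsum hκ0 hf, fun C hC =>
    ENNReal.ofReal_inv_le_of_forall_lt hκ0 fun s hs =>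
      ofReal_inv_le_of_bellmanOp_bound hp hsum hC (hκ0.trans hs) hs⟩

/-- One-dimensional sharp Bellman (dual Hardy) inequality: for `1 < p < ∞`,
`a/p' < b/p`, `a + b = D > 0`, with `Bf(r) = ∫_r^∞ f(t) t^{D-1} dt`, one has
`‖r^{-a} Bf‖_{L^p(r^{D-1}dr)} ≤ C ‖r^b f‖_{L^p(r^{D-1}dr)}` with the sharp constant
`C = (b/p - a/p')⁻¹`. -/
theorem bellman_sharp (D p a b : ℝ) (hD : 0 < D) (hp : 1 < p)
    (hab : a / (p / (p - 1)) < b / p) (hsum : a + b = D) :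
    (∀ f : ℝ → ℝ, Measurable f →
      eLpNorm (fun r => r ^ (-a) * ∫ t in Set.Ioi r, f t * t ^ (D - 1))
          (ENNReal.ofReal p) (powMeasure D) ≤
        ENNReal.ofReal (b / p - a / (p / (p - 1)))⁻¹ *
          eLpNorm (fun r => r ^ b * f r) (ENNReal.ofReal p) (powMeasure D)) ∧
    (∀ C : ℝ≥0∞,
      (∀ f : ℝ → ℝ, Measurable f →
        eLpNorm (fun r => r ^ (-a) * ∫ t in Set.Ioi r, f t * t ^ (D - 1))
            (ENNReal.ofReal p) (powMeasure D) ≤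
          C * eLpNorm (fun r => r ^ b * f r) (ENNReal.ofReal p) (powMeasure D)) →
      ENNReal.ofReal (b / p - a / (p / (p - 1)))⁻¹ ≤ C) :=
  bellman_sharp_general D p a b hp hab hsum
end

section
/- Gauss summation applied to the Herbst constant: if a, b, c are real numbers with c > a + b, c not a nonpositive integer, a > 0, b > 0, then Σ_{m=0}^∞ Γ(a+m)Γ(b+m)/(Γ(1+m)Γ(c+m)) = Γ(a)Γ(b)Γ(c−a−b)/(Γ(c−a)Γ(c−b)). -/
/-!
Write `B(p, q) = Γ(p)Γ(q)/Γ(p+q) = ∫₀¹ t^(p-1) (1-t)^(q-1) dt`. The `m`-th term of the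
series is `Γ(a)/Γ(c-b) · C(a+m-1, m) · B(b+m, c-b)`, and `C(a+m-1, m)` is the `m`-th
coefficient of the binomial series of `(1-t)^(-a)`. Summing under the integral sign, which is
legitimate because every term is nonnegative, turns the series into
`Γ(a)/Γ(c-b) · ∫₀¹ t^(b-1) (1-t)^(c-a-b-1) dt = Γ(a)/Γ(c-b) · B(b, c-a-b)`.
-/

open Real MeasureTheory Set ProbabilityTheory

theorem Ring.choose_add_sub_one_eq_ascPochhammer_div_factorial (a : ℝ) (n : ℕ) :
    Ring.choose (a + n - 1) n = (ascPochhammer ℝ n).eval a / n.factorial := by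
  rw [← Ring.multichoose_eq, eq_div_iff (by positivity), mul_comm, ← nsmul_eq_mul,
    Ring.factorial_nsmul_multichoose_eq_ascPochhammer, Polynomial.ascPochhammer_smeval_eq_eval]

theorem ascPochhammer_eval_mul_Gamma {a : ℝ} (ha : ∀ k : ℕ, a ≠ -k) (n : ℕ) :
    (ascPochhammer ℝ n).eval a * Gamma a = Gamma (a + n) := by
  induction n with
  | zero => simp
  | succ n ih =>
    have : a + n ≠ 0 := fun h => ha n (by linarith)
    rw [ascPochhammer_succ_eval, Nat.cast_succ, ← add_assoc, Gamma_add_one this, ← ih]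
    ring

theorem hasSum_choose_add_sub_one_mul_pow (a : ℝ) {t : ℝ} (ht : |t| < 1) :
    HasSum (fun m : ℕ => Ring.choose (a + m - 1) m * t ^ m) ((1 - t) ^ (-a)) := by
  have h := (one_div_one_sub_rpow_hasFPowerSeriesOnBall_zero a).hasSum
    (y := t) (by simpa [enorm_eq_nnnorm, ← NNReal.coe_lt_coe] using ht)
  have h1t : 0 ≤ 1 - t := by linarith [le_abs_self t]
  simpa [FormalMultilinearSeries.ofScalars_apply_eq, rpow_neg h1t, mul_comm] using h

theorem lintegral_Ioo_rpow_mul_one_sub_rpow_eq_beta {p q : ℝ} (hp : 0 < p) (hq : 0 < q) :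
    ∫⁻ t in Ioo 0 1, ENNReal.ofReal (t ^ (p - 1) * (1 - t) ^ (q - 1)) =
      ENNReal.ofReal (beta p q) := by
  have hB := beta_pos hp hq
  have h := lintegral_betaPDF_eq_one hp hq
  simp_rw [lintegral_betaPDF, mul_assoc, ENNReal.ofReal_mul (one_div_pos.2 hB).le] at h
  rw [lintegral_const_mul _ (by fun_prop)] at h
  rw [ENNReal.eq_inv_of_mul_eq_one_left (a := ∫⁻ t in Ioo 0 1, _) (by rwa [mul_comm]), one_div,
    ENNReal.ofReal_inv_of_pos hB, inv_inv]

theorem hasSum_of_tsum_ofReal_eq {α : Type*} {f : α → ℝ} (hf : ∀ i, 0 ≤ f i) {r : ℝ}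
    (hr : 0 ≤ r) (h : ∑' i, ENNReal.ofReal (f i) = ENNReal.ofReal r) : HasSum f r := by
  have hsum : Summable f :=
    (ENNReal.summable_toReal (h ▸ ENNReal.ofReal_ne_top)).congr
      fun i => ENNReal.toReal_ofReal (hf i)
  rw [← ENNReal.ofReal_tsum_of_nonneg hf hsum,
    ENNReal.ofReal_eq_ofReal_iff (tsum_nonneg hf) hr] at h
  exact h ▸ hsum.hasSum

theorem hasSum_choose_mul_beta {a p q : ℝ} (ha : 0 < a) (hp : 0 < p) (haq : a < q) :
    HasSum (fun m : ℕ => Ring.choose (a + m - 1) m * beta (p + m) q) (beta p (q - a)) := by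
  have hq : 0 < q := ha.trans haq
  have hchoose (m : ℕ) : 0 ≤ Ring.choose (a + m - 1) m := by
    rw [Ring.choose_add_sub_one_eq_ascPochhammer_div_factorial]
    exact div_nonneg (ascPochhammer_pos m a ha).le (by positivity)
  have hterm (m : ℕ) : ENNReal.ofReal (Ring.choose (a + m - 1) m * beta (p + m) q) =
      ∫⁻ t in Ioo 0 1,
        ENNReal.ofReal (Ring.choose (a + m - 1) m * t ^ m * (t ^ (p - 1) * (1 - t) ^ (q - 1))) := by
    rw [ENNReal.ofReal_mul (hchoose m),
      ← lintegral_Ioo_rpow_mul_one_sub_rpow_eq_beta (by positivity) hq,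
      ← lintegral_const_mul' _ _ ENNReal.ofReal_ne_top]
    refine setLIntegral_congr_fun measurableSet_Ioo fun t ht => ?_
    rw [← ENNReal.ofReal_mul (hchoose m), show p + m - 1 = p - 1 + m by ring, rpow_add ht.1,
      rpow_natCast]
    ring_nf
  have hpointwise : ∀ t ∈ Ioo (0 : ℝ) 1,
      ∑' m : ℕ, ENNReal.ofReal
        (Ring.choose (a + m - 1) m * t ^ m * (t ^ (p - 1) * (1 - t) ^ (q - 1))) =
      ENNReal.ofReal (t ^ (p - 1) * (1 - t) ^ (q - a - 1)) := by
    intro t ht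
    have h1t : 0 < 1 - t := by linarith [ht.2]
    have hs := (hasSum_choose_add_sub_one_mul_pow a
      (abs_lt.2 ⟨by linarith [ht.1], ht.2⟩)).mul_right (t ^ (p - 1) * (1 - t) ^ (q - 1))
    rw [← ENNReal.ofReal_tsum_of_nonneg (fun m => by have := hchoose m; have := ht.1; positivity)
      hs.summable, hs.tsum_eq, show q - a - 1 = -a + (q - 1) by ring, rpow_add h1t]
    ring_nf
  refine hasSum_of_tsum_ofReal_eq (fun m => mul_nonneg (hchoose m) (beta_pos (by positivity) hq).le)
    (beta_pos hp (by linarith)).le ?_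
  rw [tsum_congr hterm, ← lintegral_tsum (fun m => by fun_prop),
    setLIntegral_congr_fun measurableSet_Ioo hpointwise,
    lintegral_Ioo_rpow_mul_one_sub_rpow_eq_beta hp (by linarith)]

theorem Gamma_mul_Gamma_div_eq_choose_mul_beta {a b c : ℝ} (ha : 0 < a) (hbc : b < c) (m : ℕ) :
    Gamma (a + m) * Gamma (b + m) / (Gamma (1 + m) * Gamma (c + m)) =
      Gamma a / Gamma (c - b) * (Ring.choose (a + m - 1) m * beta (b + m) (c - b)) := by
  have hGa := (Gamma_pos_of_pos ha).ne'
  have hGcb := (Gamma_pos_of_pos (sub_pos.2 hbc)).ne'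
  rw [Ring.choose_add_sub_one_eq_ascPochhammer_div_factorial,
    ← ascPochhammer_eval_mul_Gamma (fun k => ?_), beta, show b + m + (c - b) = c + m by ring,
    add_comm 1, Gamma_nat_eq_factorial]
  · field_simp
  · linarith [Nat.cast_nonneg (α := ℝ) k]

theorem gauss_summation_herbst_general (a b c : ℝ) (ha : 0 < a) (hb : 0 < b)
    (hc : a + b < c) :
    ∑' m : ℕ,
        Real.Gamma (a + m) * Real.Gamma (b + m) /
          (Real.Gamma (1 + m) * Real.Gamma (c + m)) =
      Real.Gamma a * Real.Gamma b * Real.Gamma (c - a - b) /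
        (Real.Gamma (c - a) * Real.Gamma (c - b)) := by
  have hsum := (hasSum_choose_mul_beta ha hb (show a < c - b by linarith)).mul_left
    (Gamma a / Gamma (c - b))
  rw [tsum_congr (Gamma_mul_Gamma_div_eq_choose_mul_beta ha (by linarith)), hsum.tsum_eq, beta,
    show b + (c - b - a) = c - a by ring, sub_right_comm c b a]
  field_simp

/-- Gauss summation applied to the Herbst constant: for `a, b > 0`, `c > a + b`,
`c` not a nonpositive integer,
`Σ_{m=0}^∞ Γ(a+m)Γ(b+m)/(Γ(1+m)Γ(c+m)) = Γ(a)Γ(b)Γ(c-a-b)/(Γ(c-a)Γ(c-b))`. -/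
theorem gauss_summation_herbst (a b c : ℝ) (ha : 0 < a) (hb : 0 < b)
    (hc : a + b < c) (hcz : ∀ n : ℕ, c ≠ -(n : ℝ)) :
    ∑' m : ℕ,
        Real.Gamma (a + m) * Real.Gamma (b + m) /
          (Real.Gamma (1 + m) * Real.Gamma (c + m)) =
      Real.Gamma a * Real.Gamma b * Real.Gamma (c - a - b) /
        (Real.Gamma (c - a) * Real.Gamma (c - b)) :=
  gauss_summation_herbst_general a b c ha hb hc
end

section
/- Finiteness of the sharp Stein–Weiss constant integral: let D > 1, 1 < p < ∞, 0 < α, β < D/p', γ = α − β < D/p. Then the integral ∫₀^∞ t^{D/p − α + β − 1} ∫₀^π (t² + 1 − 2t cos φ)^{(α−D)/2} sin^{D−2}φ dφ dt is finite. -/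
open Real MeasureTheory Set

/-!
Write `Q(t, φ) = t² + 1 - 2t cos φ = (t - 1)² + 2t (1 - cos φ)` and `a = (α - D)/2 < 0`.
Away from `t = 1`, `Q ≥ (t - 1)²` bounds the inner integral by `C |t - 1|^{2a}`, which is
integrable against `t^{D/p - α + β - 1}` at `0` because `γ < D/p` and at `∞` because `β < D/p'`.
Near `t = 1`, `Q ≥ (t - 1)² + (φ/π)²`; splitting `a = b₁ + b₂` into nonpositive parts and using
`(x + y)^{b₁ + b₂} ≤ x^{b₁} y^{b₂}` bounds the inner integral by `C |t - 1|^{2b₁}` times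
`∫ φ^{2b₂} sin^{D-2} φ dφ`. Since `α > 0`, the split can be chosen so that both `|t - 1|^{2b₁}` and
`φ^{2b₂} sin^{D-2} φ` are integrable.
-/

theorem sin_rpow_le_mul_rpow {φ s : ℝ} (hφ : 0 < φ) (hφπ : φ ≤ π / 2) :
    sin φ ^ s ≤ max 1 ((2 / π) ^ s) * φ ^ s := by
  have hsin : 2 / π * φ ≤ sin φ := mul_le_sin hφ.le hφπ
  rcases le_total 0 s with hs | hs
  · calc sin φ ^ s ≤ φ ^ s :=
          rpow_le_rpow ((by positivity : 0 ≤ 2 / π * φ).trans hsin) (sin_le hφ.le) hs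
      _ ≤ max 1 ((2 / π) ^ s) * φ ^ s := le_mul_of_one_le_left (by positivity) (le_max_left _ _)
  · calc sin φ ^ s ≤ (2 / π * φ) ^ s := rpow_le_rpow_of_nonpos (by positivity) hsin hs
      _ = (2 / π) ^ s * φ ^ s := mul_rpow (by positivity) hφ.le
      _ ≤ max 1 ((2 / π) ^ s) * φ ^ s := by gcongr; exact le_max_right _ _

theorem intervalIntegrable_rpow_mul_sin_rpow_zero_pi_div_two {c s : ℝ} (hcs : -1 < c + s) :
    IntervalIntegrable (fun φ => φ ^ c * sin φ ^ s) volume 0 (π / 2) := by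
  have hdom : IntervalIntegrable (fun φ => max 1 ((2 / π) ^ s) * φ ^ (c + s)) volume 0 (π / 2) :=
    (intervalIntegral.intervalIntegrable_rpow' hcs).const_mul _
  rw [intervalIntegrable_iff_integrableOn_Ioc_of_le (by positivity)] at hdom ⊢
  refine hdom.mono' (by fun_prop) ?_
  filter_upwards [ae_restrict_mem measurableSet_Ioc] with φ ⟨hφ, hφπ⟩
  have hsin : 0 ≤ sin φ := sin_nonneg_of_nonneg_of_le_pi hφ.le (by linarith [pi_pos])
  rw [norm_of_nonneg (by positivity), rpow_add hφ]
  calc φ ^ c * sin φ ^ s ≤ φ ^ c * (max 1 ((2 / π) ^ s) * φ ^ s) := by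
        gcongr; exact sin_rpow_le_mul_rpow hφ hφπ
    _ = _ := by ring

theorem intervalIntegrable_sin_rpow {s : ℝ} (hs : -1 < s) :
    IntervalIntegrable (fun φ => sin φ ^ s) volume 0 π := by
  have hleft : IntervalIntegrable (fun φ => sin φ ^ s) volume 0 (π / 2) := by
    simpa using intervalIntegrable_rpow_mul_sin_rpow_zero_pi_div_two (c := 0) (s := s) (by simpa)
  have hright := (hleft.comp_sub_left π).symm
  simp only [sin_pi_sub, sub_zero] at hright
  exact hleft.trans (by convert hright using 2; ring)

theorem intervalIntegrable_rpow_mul_sin_rpow {c s : ℝ} (hs : -1 < s) (hcs : -1 < c + s) :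
    IntervalIntegrable (fun φ => φ ^ c * sin φ ^ s) volume 0 π := by
  refine (intervalIntegrable_rpow_mul_sin_rpow_zero_pi_div_two hcs).trans ?_
  refine ((intervalIntegrable_sin_rpow hs).mono_set ?_).continuousOn_mul ?_
  · rw [uIcc_of_le (by linarith [pi_pos]), uIcc_of_le pi_pos.le]
    exact Icc_subset_Icc (by positivity) le_rfl
  · rw [uIcc_of_le (by linarith [pi_pos])]
    exact continuousOn_id.rpow_const fun φ hφ =>
      Or.inl (show (0 : ℝ) < φ by linarith [hφ.1, pi_pos]).ne'

theorem intervalIntegrable_abs_sub_rpow {c : ℝ} (hc : -1 < c) (x₀ a b : ℝ) :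
    IntervalIntegrable (fun x => |x - x₀| ^ c) volume a b := by
  have hloc : LocallyIntegrable (fun x : ℝ => |x| ^ c) volume := by
    refine locallyIntegrable_of_norm_le_rpow (C := 1) (α := -c) (by simp) (by simp; linarith)
      (Filter.Eventually.of_forall fun x => by simp [abs_of_nonneg (rpow_nonneg (abs_nonneg x) c)])
      (continuous_abs.measurable.pow_const c).aestronglyMeasurable
  simpa using ((hloc.integrableOn_isCompact isCompact_uIcc).intervalIntegrable
    (a := a - x₀) (b := b - x₀)).comp_sub_right x₀

theorem sq_add_one_sub_two_mul_cos_nonneg (t φ : ℝ) : 0 ≤ t ^ 2 + 1 - 2 * t * cos φ := by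
  nlinarith [sq_nonneg (t - cos φ), sin_sq_add_cos_sq φ, sq_nonneg (sin φ)]

theorem sq_sub_one_le_sq_add_one_sub_two_mul_cos {t : ℝ} (ht : 0 ≤ t) (φ : ℝ) :
    (t - 1) ^ 2 ≤ t ^ 2 + 1 - 2 * t * cos φ := by
  nlinarith [mul_nonneg ht (sub_nonneg.2 (cos_le_one φ))]

theorem sq_sub_one_add_sq_div_pi_le {t φ : ℝ} (ht : 1 / 2 ≤ t) (hφ : |φ| ≤ π) :
    (t - 1) ^ 2 + (φ / π) ^ 2 ≤ t ^ 2 + 1 - 2 * t * cos φ := by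
  have hcos : 2 * (φ / π) ^ 2 ≤ 1 - cos φ := by
    have := cos_le_one_sub_mul_cos_sq hφ
    rw [div_pow]; linarith [show 2 / π ^ 2 * φ ^ 2 = 2 * (φ ^ 2 / π ^ 2) by ring]
  nlinarith [mul_le_mul_of_nonneg_left hcos (by linarith : 0 ≤ t), sq_nonneg (φ / π)]

theorem rpow_add_le_rpow_mul_rpow {x y b₁ b₂ : ℝ} (hx : 0 < x) (hy : 0 < y) (hb₁ : b₁ ≤ 0)
    (hb₂ : b₂ ≤ 0) : (x + y) ^ (b₁ + b₂) ≤ x ^ b₁ * y ^ b₂ := by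
  rw [rpow_add (by positivity)]
  exact mul_le_mul (rpow_le_rpow_of_nonpos hx (by linarith) hb₁)
    (rpow_le_rpow_of_nonpos hy (by linarith) hb₂) (by positivity) (by positivity)

theorem exists_exponent_split {a s : ℝ} (ha : a ≤ 0) (hs : -1 < s) (has : -2 < 2 * a + s) :
    ∃ b₁ b₂ : ℝ, b₁ ≤ 0 ∧ b₂ ≤ 0 ∧ b₁ + b₂ = a ∧ -1 < 2 * b₁ ∧ -1 < 2 * b₂ + s := by
  have hmax : max (2 * a) (-1) < 2 * a + s + 1 := max_lt (by linarith) (by linarith)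
  have hmax' : max (2 * a) (-1) ≤ 0 := max_le (by linarith) (by linarith)
  have hmin : 2 * a ≤ min 0 (2 * a + s + 1) := le_min (by linarith) (by linarith)
  have hmin' : -1 < min 0 (2 * a + s + 1) := lt_min (by linarith) (by linarith)
  refine ⟨(max (2 * a) (-1) + min 0 (2 * a + s + 1)) / 4,
    a - (max (2 * a) (-1) + min 0 (2 * a + s + 1)) / 4, ?_, ?_, by ring, ?_, ?_⟩ <;>
    linarith [le_max_left (2 * a) (-1), le_max_right (2 * a) (-1), min_le_left 0 (2 * a + s + 1),
      min_le_right 0 (2 * a + s + 1)]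

/-- For `s = D - 2` this is, up to a constant, the mean of `|t e₁ - ω|^{2a}` over `ω ∈ S^{D-1}`. -/
noncomputable def gegenbauerIntegral (a s t : ℝ) : ℝ :=
  ∫ φ in (0 : ℝ)..π, (t ^ 2 + 1 - 2 * t * cos φ) ^ a * sin φ ^ s

theorem measurable_gegenbauerIntegral (a s : ℝ) : Measurable (gegenbauerIntegral a s) := by
  have h : Measurable fun q : ℝ × ℝ => (q.1 ^ 2 + 1 - 2 * q.1 * cos q.2) ^ a * sin q.2 ^ s := by
    fun_prop
  unfold gegenbauerIntegral
  simp only [intervalIntegral.integral_of_le pi_pos.le]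
  exact h.stronglyMeasurable.integral_prod_right'.measurable

theorem gegenbauerIntegral_nonneg (a s t : ℝ) : 0 ≤ gegenbauerIntegral a s t :=
  intervalIntegral.integral_nonneg pi_pos.le fun φ hφ =>
    mul_nonneg (rpow_nonneg (sq_add_one_sub_two_mul_cos_nonneg t φ) a)
      (rpow_nonneg (sin_nonneg_of_nonneg_of_le_pi hφ.1 hφ.2) s)

theorem gegenbauerIntegral_le_integral {a s t : ℝ} {g : ℝ → ℝ}
    (hg : IntervalIntegrable g volume 0 π)
    (h : ∀ φ ∈ Ioo 0 π, (t ^ 2 + 1 - 2 * t * cos φ) ^ a * sin φ ^ s ≤ g φ) :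
    gegenbauerIntegral a s t ≤ ∫ φ in (0 : ℝ)..π, g φ := by
  simp only [gegenbauerIntegral, intervalIntegral.integral_of_le pi_pos.le,
    integral_Ioc_eq_integral_Ioo]
  refine setIntegral_mono_of_nonneg (fun φ hφ => ?_) h (hg.1.mono_set Ioo_subset_Ioc_self)
  exact mul_nonneg (rpow_nonneg (sq_add_one_sub_two_mul_cos_nonneg t φ) a)
    (rpow_nonneg (sin_nonneg_of_nonneg_of_le_pi hφ.1.le hφ.2.le) s)

theorem gegenbauerIntegral_le_abs_sub_one_rpow {a s t : ℝ} (ha : a ≤ 0) (hs : -1 < s)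
    (ht : 0 ≤ t) (ht₁ : t ≠ 1) :
    gegenbauerIntegral a s t ≤ |t - 1| ^ (2 * a) * ∫ φ in (0 : ℝ)..π, sin φ ^ s := by
  rw [← intervalIntegral.integral_const_mul]
  refine gegenbauerIntegral_le_integral ((intervalIntegrable_sin_rpow hs).const_mul _)
    fun φ hφ => mul_le_mul_of_nonneg_right ?_
      (rpow_nonneg (sin_nonneg_of_nonneg_of_le_pi hφ.1.le hφ.2.le) s)
  rw [rpow_mul (abs_nonneg _), rpow_two, sq_abs]
  exact rpow_le_rpow_of_nonpos (by positivity [sub_ne_zero.2 ht₁])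
    (sq_sub_one_le_sq_add_one_sub_two_mul_cos ht φ) ha

theorem gegenbauerIntegral_add_le_abs_sub_one_rpow {b₁ b₂ s t : ℝ} (hb₁ : b₁ ≤ 0)
    (hb₂ : b₂ ≤ 0) (hs : -1 < s) (hb₂s : -1 < 2 * b₂ + s) (ht : 1 / 2 ≤ t) (ht₁ : t ≠ 1) :
    gegenbauerIntegral (b₁ + b₂) s t ≤
      |t - 1| ^ (2 * b₁) * (∫ φ in (0 : ℝ)..π, φ ^ (2 * b₂) * sin φ ^ s) / π ^ (2 * b₂) := by
  rw [mul_div_right_comm, ← intervalIntegral.integral_const_mul]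
  refine gegenbauerIntegral_le_integral
    ((intervalIntegrable_rpow_mul_sin_rpow hs hb₂s).const_mul _) fun φ hφ => ?_
  have hsin := rpow_nonneg (sin_nonneg_of_nonneg_of_le_pi hφ.1.le hφ.2.le) s
  have hφπ : |φ| ≤ π := abs_le.2 ⟨by linarith [hφ.1, pi_pos], hφ.2.le⟩
  have hbase : ((t - 1) ^ 2 + (φ / π) ^ 2) ^ (b₁ + b₂) ≤
      |t - 1| ^ (2 * b₁) / π ^ (2 * b₂) * φ ^ (2 * b₂) := by
    calc _ ≤ ((t - 1) ^ 2) ^ b₁ * ((φ / π) ^ 2) ^ b₂ :=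
          rpow_add_le_rpow_mul_rpow (by positivity [sub_ne_zero.2 ht₁])
            (pow_pos (div_pos hφ.1 pi_pos) 2) hb₁ hb₂
      _ = _ := by
        rw [← sq_abs (t - 1), ← rpow_two, ← rpow_two, ← rpow_mul (abs_nonneg _),
          ← rpow_mul (div_pos hφ.1 pi_pos).le, div_rpow hφ.1.le pi_pos.le]
        ring
  calc (t ^ 2 + 1 - 2 * t * cos φ) ^ (b₁ + b₂) * sin φ ^ s
      ≤ ((t - 1) ^ 2 + (φ / π) ^ 2) ^ (b₁ + b₂) * sin φ ^ s := by
        refine mul_le_mul_of_nonneg_right (rpow_le_rpow_of_nonpos ?_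
          (sq_sub_one_add_sq_div_pi_le ht hφπ) (by linarith)) hsin
        positivity [sub_ne_zero.2 ht₁]
    _ ≤ |t - 1| ^ (2 * b₁) / π ^ (2 * b₂) * φ ^ (2 * b₂) * sin φ ^ s :=
        mul_le_mul_of_nonneg_right hbase hsin
    _ = _ := by ring

theorem integrableOn_of_norm_le_of_ne {α E : Type*} [MeasurableSpace α] [NormedAddCommGroup E]
    {μ : Measure α} [NullSingletonClass μ] {f : α → E} {g : α → ℝ} {s : Set α} {x₀ : α}
    (hs : MeasurableSet s) (hg : IntegrableOn g s μ) (hf : AEStronglyMeasurable f μ)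
    (h : ∀ x ∈ s, x ≠ x₀ → ‖f x‖ ≤ g x) : IntegrableOn f s μ :=
  hg.mono' hf.restrict <| by
    filter_upwards [ae_restrict_mem hs, ae_restrict_of_ae (μ.ae_ne x₀)] with x hx hx₀
      using h x hx hx₀

theorem integrableOn_rpow_mul_abs_sub_one_rpow_Ioc_zero {e : ℝ} (he : -1 < e) (c : ℝ) :
    IntegrableOn (fun t : ℝ => t ^ e * |t - 1| ^ c) (Ioc 0 (1 / 2)) := by
  rw [← intervalIntegrable_iff_integrableOn_Ioc_of_le (by norm_num)]
  refine (intervalIntegral.intervalIntegrable_rpow' he).mul_continuousOn ?_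
  rw [uIcc_of_le (by norm_num)]
  exact (continuousOn_id.sub continuousOn_const).abs.rpow_const fun t ht =>
    Or.inl (abs_ne_zero.2 (by linarith [ht.2] : t - 1 < 0).ne)

theorem integrableOn_rpow_mul_abs_sub_one_rpow_Ioc_half (e : ℝ) {c : ℝ} (hc : -1 < c) :
    IntegrableOn (fun t : ℝ => t ^ e * |t - 1| ^ c) (Ioc (1 / 2) 2) := by
  rw [← intervalIntegrable_iff_integrableOn_Ioc_of_le (by norm_num)]
  refine (intervalIntegrable_abs_sub_rpow hc 1 _ _).continuousOn_mul ?_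
  rw [uIcc_of_le (by norm_num)]
  exact continuousOn_id.rpow_const fun t ht => Or.inl (by linarith [ht.1] : (0 : ℝ) < t).ne'

theorem integrableOn_rpow_mul_abs_sub_one_rpow_Ioi_two {e c : ℝ} (hc : c ≤ 0)
    (hec : e + c < -1) : IntegrableOn (fun t : ℝ => t ^ e * |t - 1| ^ c) (Ioi 2) := by
  refine ((integrableOn_Ioi_rpow_of_lt hec two_pos).const_mul (2 ^ (-c))).mono'
    (by fun_prop) ?_
  filter_upwards [ae_restrict_mem measurableSet_Ioi] with t (ht : 2 < t)
  have ht₀ : 0 < t := by linarith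
  rw [norm_of_nonneg (by positivity)]
  calc t ^ e * |t - 1| ^ c ≤ t ^ e * (t / 2) ^ c := by
        refine mul_le_mul_of_nonneg_left (rpow_le_rpow_of_nonpos (by positivity) ?_ hc)
          (by positivity)
        rw [abs_of_pos (by linarith)]; linarith
    _ = 2 ^ (-c) * t ^ (e + c) := by
        rw [div_rpow ht₀.le two_pos.le, rpow_add ht₀, rpow_neg two_pos.le]; ring

theorem integrableOn_rpow_mul_gegenbauerIntegral {a s e : ℝ} (ha : a ≤ 0) (hs : -1 < s)
    (has : -2 < 2 * a + s) (he : -1 < e) (hea : e + 2 * a < -1) :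
    IntegrableOn (fun t => t ^ e * gegenbauerIntegral a s t) (Ioi 0) := by
  obtain ⟨b₁, b₂, hb₁, hb₂, rfl, hb₁', hb₂s⟩ := exists_exponent_split ha hs has
  set S := ∫ φ in (0 : ℝ)..π, sin φ ^ s
  set K := (∫ φ in (0 : ℝ)..π, φ ^ (2 * b₂) * sin φ ^ s) / π ^ (2 * b₂)
  have hmeas : AEStronglyMeasurable (fun t => t ^ e * gegenbauerIntegral (b₁ + b₂) s t) :=
    ((measurable_id.pow_const e).mul (measurable_gegenbauerIntegral _ _)).aestronglyMeasurable
  have hfar : ∀ t, 0 < t → t ≠ 1 → ‖t ^ e * gegenbauerIntegral (b₁ + b₂) s t‖ ≤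
      S * (t ^ e * |t - 1| ^ (2 * (b₁ + b₂))) := fun t ht ht₁ => by
    rw [norm_of_nonneg (mul_nonneg (by positivity) (gegenbauerIntegral_nonneg _ _ _))]
    calc _ ≤ t ^ e * (|t - 1| ^ (2 * (b₁ + b₂)) * S) := mul_le_mul_of_nonneg_left
          (gegenbauerIntegral_le_abs_sub_one_rpow (by linarith) hs ht.le ht₁) (by positivity)
      _ = _ := by ring
  have hnear : ∀ t, 1 / 2 ≤ t → t ≠ 1 → ‖t ^ e * gegenbauerIntegral (b₁ + b₂) s t‖ ≤
      K * (t ^ e * |t - 1| ^ (2 * b₁)) := fun t ht ht₁ => by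
    rw [norm_of_nonneg (mul_nonneg (by positivity) (gegenbauerIntegral_nonneg _ _ _))]
    calc _ ≤ t ^ e * (|t - 1| ^ (2 * b₁) * (∫ φ in (0 : ℝ)..π, φ ^ (2 * b₂) * sin φ ^ s) /
          π ^ (2 * b₂)) := mul_le_mul_of_nonneg_left
          (gegenbauerIntegral_add_le_abs_sub_one_rpow hb₁ hb₂ hs hb₂s ht ht₁) (by positivity)
      _ = _ := by ring
  rw [← Ioc_union_Ioi_eq_Ioi (by norm_num : (0 : ℝ) ≤ 1 / 2),
    ← Ioc_union_Ioi_eq_Ioi (by norm_num : (1 / 2 : ℝ) ≤ 2)]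
  refine (integrableOn_of_norm_le_of_ne measurableSet_Ioc
    ((integrableOn_rpow_mul_abs_sub_one_rpow_Ioc_zero he _).const_mul S) hmeas
    fun t ht ht₁ => hfar t ht.1 ht₁).union ((integrableOn_of_norm_le_of_ne measurableSet_Ioc
    ((integrableOn_rpow_mul_abs_sub_one_rpow_Ioc_half e (by linarith)).const_mul K) hmeas
    fun t ht ht₁ => hnear t ht.1.le ht₁).union (integrableOn_of_norm_le_of_ne measurableSet_Ioi
    ((integrableOn_rpow_mul_abs_sub_one_rpow_Ioi_two (by linarith) (by linarith)).const_mul S)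
    hmeas fun t ht ht₁ => hfar t (by linarith [mem_Ioi.1 ht]) ht₁))

/-- Finiteness of the sharp Stein–Weiss constant integral: for `D > 1`, `1 < p < ∞`,
`0 < α`, `β < D/p'`, `γ = α - β < D/p`, the integral
`∫₀^∞ t^{D/p - α + β - 1} ∫₀^π (t² + 1 - 2t cos φ)^{(α-D)/2} sin^{D-2} φ dφ dt`
is finite. -/
theorem stein_weiss_constant_finite (D p α β : ℝ) (hD : 1 < D) (hp : 1 < p)
    (hα : 0 < α) (hβ : β < D / (p / (p - 1))) (hγ : α - β < D / p) :
    IntegrableOn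
      (fun t => t ^ (D / p - α + β - 1) *
        ∫ φ in (0 : ℝ)..Real.pi,
          (t ^ 2 + 1 - 2 * t * Real.cos φ) ^ ((α - D) / 2) * Real.sin φ ^ (D - 2))
      (Set.Ioi (0 : ℝ)) := by
  have hβ' : β < D - D / p := by
    rwa [show D / (p / (p - 1)) = D - D / p by field_simp] at hβ
  have hDp : 0 < D / p := by positivity
  exact integrableOn_rpow_mul_gegenbauerIntegral (a := (α - D) / 2) (s := D - 2)
    (by linarith) (by linarith) (by linarith) (by linarith) (by linarith)
end
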